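/- arXiv:1006.3878 — 2 statements merged into one kernel-verified Lean document; each statement's English description precedes it below -/
import Mathlib

section
/- Let 0 < c ≤ 1 and let a ≥ 1. If at least ⌈c·k^a⌉ discrete objects are allocated to k containers, none of which contains more than k^(a-1) objects, then at least ⌊c·k^(a-1)/2⌋ of the objects are in each of more than c·k/2 containers. -/
/-- Modified pigeonhole principle: if at least ⌈c·k^a⌉ objects are allocated to
`k` containers, none containing more than `k^(a-1)` objects, then more than `c·k/2`
containers each contain at least `⌊c·k^(a-1)/2⌋` objects. -/
theorem stmt_0 {α : Type*} [DecidableEq α] (c a : ℝ) (hc0 : 0 < c) (hc1 : c ≤ 1)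
    (ha : 1 ≤ a) (k : ℕ) (hk : 0 < k)
    (O : Finset α) (f : α → Fin k)
    (hO : (⌈c * (k : ℝ) ^ a⌉ : ℝ) ≤ O.card)
    (hfib : ∀ i : Fin k, ((O.filter (fun x => f x = i)).card : ℝ) ≤ (k : ℝ) ^ (a - 1)) :
    c * k / 2 <
      ((Finset.univ.filter (fun i : Fin k =>
        (⌊c * (k : ℝ) ^ (a - 1) / 2⌋ : ℝ) ≤ (O.filter (fun x => f x = i)).card)).card : ℝ) := by
  classical
  set x : ℝ := c * (k : ℝ) ^ (a - 1) / 2 with hxdef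
  set p : Fin k → Prop := fun i =>
    (⌊c * (k : ℝ) ^ (a - 1) / 2⌋ : ℝ) ≤ (O.filter (fun y => f y = i)).card with hpdef
  set S := Finset.univ.filter p with hSdef
  set L := Finset.univ.filter (fun i => ¬ p i) with hLdef
  have hk' : (0 : ℝ) < k := by exact_mod_cast hk
  have hpow : (0 : ℝ) < (k : ℝ) ^ (a - 1) := Real.rpow_pos_of_pos hk' _
  have hka : (k : ℝ) ^ a = (k : ℝ) ^ (a - 1) * k := by
    rw [← Real.rpow_add_one hk'.ne']
    norm_num
  have hcards : S.card + L.card = k := by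
    rw [hSdef, hLdef, Finset.card_filter_add_card_filter_not]
    simp
  have hsum : (O.card : ℝ) = ∑ i : Fin k, ((O.filter (fun y => f y = i)).card : ℝ) := by
    rw_mod_cast [Finset.card_eq_sum_card_fiberwise (f := f) (t := Finset.univ)
      (fun y _ => Finset.mem_univ (f y))]
  have hsplit : ∑ i ∈ S, ((O.filter (fun y => f y = i)).card : ℝ)
      + ∑ i ∈ L, ((O.filter (fun y => f y = i)).card : ℝ)
      = ∑ i : Fin k, ((O.filter (fun y => f y = i)).card : ℝ) := by
    rw [hSdef, hLdef]
    exact Finset.sum_filter_add_sum_filter_not _ _ _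
  have hObig : c * (k : ℝ) ^ a ≤ (O.card : ℝ) := le_trans (Int.le_ceil _) hO
  have hSbound : ∑ i ∈ S, ((O.filter (fun y => f y = i)).card : ℝ)
      ≤ S.card * (k : ℝ) ^ (a - 1) := by
    calc ∑ i ∈ S, ((O.filter (fun y => f y = i)).card : ℝ)
        ≤ ∑ i ∈ S, (k : ℝ) ^ (a - 1) := Finset.sum_le_sum (fun i _ => hfib i)
      _ = S.card * (k : ℝ) ^ (a - 1) := by rw [Finset.sum_const, nsmul_eq_mul]
  by_cases hL : L.Nonempty
  · -- there is a light container
    have hlight : ∀ i ∈ L, ((O.filter (fun y => f y = i)).card : ℝ) ≤ x - 1 := by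
      intro i hi
      rw [hLdef, Finset.mem_filter] at hi
      have hlt : ((O.filter (fun y => f y = i)).card : ℤ) < ⌊x⌋ := by
        have h := hi.2
        simp only [hpdef, not_le] at h
        exact_mod_cast h
      have h1 : ((O.filter (fun y => f y = i)).card : ℤ) + 1 ≤ ⌊x⌋ := hlt
      have h2 : (⌊x⌋ : ℝ) ≤ x := Int.floor_le x
      have h3 : ((O.filter (fun y => f y = i)).card : ℝ) + 1 ≤ (⌊x⌋ : ℝ) := by
        exact_mod_cast h1
      linarith
    have hLbound : ∑ i ∈ L, ((O.filter (fun y => f y = i)).card : ℝ)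
        ≤ L.card * (x - 1) := by
      calc ∑ i ∈ L, ((O.filter (fun y => f y = i)).card : ℝ)
          ≤ ∑ i ∈ L, (x - 1) := Finset.sum_le_sum hlight
        _ = L.card * (x - 1) := by rw [Finset.sum_const, nsmul_eq_mul]
      -- x ≥ 1 since some light fiber has nonneg card
    obtain ⟨j, hj⟩ := hL
    have hx1 : 1 ≤ x := by
      have := hlight j hj
      have h0 : (0 : ℝ) ≤ ((O.filter (fun y => f y = j)).card : ℝ) := by positivity
      linarith
    have hLpos : 1 ≤ (L.card : ℝ) := by
      have : 1 ≤ L.card := Finset.card_pos.mpr ⟨j, hj⟩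
      exact_mod_cast this
    have hScard : (S.card : ℝ) + (L.card : ℝ) = k := by exact_mod_cast hcards
    have hSnn : (0 : ℝ) ≤ (S.card : ℝ) := Nat.cast_nonneg _
    have hkey : c * (k : ℝ) ^ a ≤ (S.card : ℝ) * (k : ℝ) ^ (a - 1) + (L.card : ℝ) * (x - 1) := by
      calc c * (k : ℝ) ^ a ≤ (O.card : ℝ) := hObig
        _ = _ := hsum
        _ = _ := hsplit.symm
        _ ≤ _ := add_le_add hSbound hLbound
    rw [hka] at hkey
    -- now pure arithmetic: let s = S.card, l = L.card = k - s, q = k^(a-1), x = c*q/2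
    set s := (S.card : ℝ)
    set q := (k : ℝ) ^ (a - 1)
    have hxval : x = c * q / 2 := hxdef
    have hgoal : c * k / 2 < s := by
      nlinarith [mul_pos hc0 hpow, mul_nonneg hSnn (le_of_lt hpow),
        mul_nonneg hSnn (by linarith : (0:ℝ) ≤ x)]
    exact hgoal
  · -- all containers heavy: S.card = k
    have hL0 : L.card = 0 := by
      rw [Finset.card_eq_zero]
      exact Finset.not_nonempty_iff_eq_empty.mp hL
    have hSk : S.card = k := by omega
    rw [hSk]
    nlinarith
end

section
/- In ℝ³, let L₀ and L₁ be two skew affine lines, let A ⊆ L₀ and B ⊆ L₁ be finite sets of points with |A| = a ≥ 2 and |B| = b ≥ 2, and let P be a point on neither line. Then the central projection from P of A ∪ B onto a plane in general position spans at least (a-1)(b-1) lines; equivalently, the set A ∪ B ∪ {P} spans at least (a-1)(b-1) distinct planes through P. -/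
/-!
Let `M₀`, `M₁` be the planes spanned by `P` together with `L₀`, resp. `L₁`. By skewness `L₁`
does not lie in `M₀`, so at most one point of `B` lies on `M₀`; likewise at most one point of `A`
lies on `M₁`. For `p ∈ A \ M₁` and `q ∈ B \ M₀` the plane through `P, p, q` contains neither
line (a plane through `P` containing `L₀` is `M₀`, which would then contain `q`), so it meets
`L₀` only in `p` and `L₁` only in `q`: the pair is recovered from the plane.
-/

open scoped Classical

open Module

namespace AffineSubspace

variable {k V P : Type*} [DivisionRing k] [AddCommGroup V] [Module k V] [AddTorsor V P]

theorem eq_of_mem_of_mem_of_not_le {L M : AffineSubspace k P} (hL : finrank k L.direction = 1)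
    (hLM : ¬ L ≤ M) {x y : P} (hxL : x ∈ L) (hyL : y ∈ L) (hxM : x ∈ M) (hyM : y ∈ M) :
    x = y := by
  by_contra hxy
  have : FiniteDimensional k L.direction := .of_finrank_eq_succ hL
  have hline : line[k, x, y] ≤ L := affineSpan_pair_le_of_mem_of_mem hxL hyL
  have hdir : line[k, x, y].direction = L.direction :=
    Submodule.eq_of_le_of_finrank_eq (direction_le hline) <| by
      rw [direction_affineSpan, vectorSpan_pair, finrank_span_singleton (vsub_ne_zero.2 hxy), hL]
  refine hLM ?_
  rw [← eq_of_direction_eq_of_nonempty_of_le hdir ⟨x, left_mem_affineSpan_pair k x y⟩ hline]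
  exact affineSpan_pair_le_of_mem_of_mem hxM hyM

theorem card_sub_one_le_card_filter_notMem {L M : AffineSubspace k P}
    (hL : finrank k L.direction = 1) (hLM : ¬ L ≤ M) (s : Finset P) (hs : (s : Set P) ⊆ L) :
    s.card - 1 ≤ (s.filter (· ∉ M)).card := by
  have hM : (s.filter (· ∈ M)).card ≤ 1 := Finset.card_le_one.2 fun x hx y hy => by
    rw [Finset.mem_filter] at hx hy
    exact eq_of_mem_of_mem_of_not_le hL hLM (hs hx.1) (hs hy.1) hx.2 hy.2
  have := Finset.card_filter_add_card_filter_not (s := s) (· ∈ M)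
  omega

theorem finrank_direction_affineSpan_insert {L : AffineSubspace k P}
    [FiniteDimensional k L.direction] (hL : (L : Set P).Nonempty) {x : P} (hx : x ∉ L) :
    finrank k (affineSpan k (insert x (L : Set P))).direction = finrank k L.direction + 1 := by
  set M := affineSpan k (insert x (L : Set P))
  have hLM : L ≤ M := fun _ hy => subset_affineSpan k _ (Set.mem_insert_of_mem x hy)
  have hlt : L.direction < M.direction := by
    refine lt_of_le_of_ne (direction_le hLM) fun hdir => hx ?_
    rw [eq_of_direction_eq_of_nonempty_of_le hdir hL hLM]
    exact subset_affineSpan k _ (Set.mem_insert x _)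
  have hle : finrank k M.direction ≤ finrank k L.direction + 1 := by
    rw [direction_affineSpan]
    exact finrank_vectorSpan_insert_le L x
  have := Submodule.finrank_lt_finrank_of_lt hlt
  omega

theorem finrank_direction_affineSpan_triple_le (p₁ p₂ p₃ : P) :
    finrank k (affineSpan k {p₁, p₂, p₃}).direction ≤ 2 := by
  rw [direction_affineSpan]
  exact coplanar_iff_finrank_le_two.1 (coplanar_triple k p₁ p₂ p₃)

theorem nonempty_of_finrank_direction_ne_zero {L : AffineSubspace k P}
    (hL : finrank k L.direction ≠ 0) : (L : Set P).Nonempty := by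
  rw [Set.nonempty_iff_ne_empty, Ne, coe_eq_bot_iff]
  rintro rfl
  exact hL (by rw [direction_bot, finrank_bot])

theorem finrank_direction_affineSpan_insert_of_finrank_eq_one {L : AffineSubspace k P}
    (hL : finrank k L.direction = 1) {x : P} (hx : x ∉ L) :
    finrank k (affineSpan k (insert x (L : Set P))).direction = 2 := by
  have : FiniteDimensional k L.direction := .of_finrank_eq_succ hL
  rw [finrank_direction_affineSpan_insert (nonempty_of_finrank_direction_ne_zero (by omega)) hx, hL]

theorem affineSpan_insert_eq_of_le_affineSpan_triple {L : AffineSubspace k P}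
    (hL : finrank k L.direction = 1) {x p q : P} (hx : x ∉ L)
    (hLM : L ≤ affineSpan k {x, p, q}) :
    affineSpan k (insert x (L : Set P)) = affineSpan k {x, p, q} := by
  have hxM : x ∈ affineSpan k {x, p, q} := mem_affineSpan k (Set.mem_insert x _)
  have hle : affineSpan k (insert x (L : Set P)) ≤ affineSpan k {x, p, q} :=
    affineSpan_le.2 (Set.insert_subset hxM hLM)
  refine eq_of_direction_eq_of_nonempty_of_le ?_ ⟨x, mem_affineSpan k (Set.mem_insert x _)⟩ hle
  refine Submodule.eq_of_le_of_finrank_le (direction_le hle) ?_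
  rw [finrank_direction_affineSpan_insert_of_finrank_eq_one hL hx]
  exact finrank_direction_affineSpan_triple_le x p q

theorem not_le_affineSpan_insert_of_skew {L L' : AffineSubspace k P}
    (hL : finrank k L.direction = 1) {x : P} (hx : x ∉ L)
    (hskew : ¬ ∃ M : AffineSubspace k P, finrank k M.direction = 2 ∧ L ≤ M ∧ L' ≤ M) :
    ¬ L' ≤ affineSpan k (insert x (L : Set P)) := fun hL' =>
  hskew ⟨_, finrank_direction_affineSpan_insert_of_finrank_eq_one hL hx,
    fun _ hy => subset_affineSpan k _ (Set.mem_insert_of_mem x hy), hL'⟩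

theorem injOn_affineSpan_triple {L₀ L₁ : AffineSubspace k P} (hL₀ : finrank k L₀.direction = 1)
    (hL₁ : finrank k L₁.direction = 1) {x : P} (hx₀ : x ∉ L₀) (hx₁ : x ∉ L₁) :
    Set.InjOn (fun pq : P × P => affineSpan k {x, pq.1, pq.2})
      (((L₀ : Set P) \ affineSpan k (insert x (L₁ : Set P))) ×ˢ
        ((L₁ : Set P) \ affineSpan k (insert x (L₀ : Set P)))) := by
  rintro ⟨p, q⟩ ⟨⟨hp₀, hp₁⟩, hq₁, hq₀⟩ ⟨p', q'⟩ ⟨⟨hp₀', -⟩, hq₁', -⟩ (heq : affineSpan k _ = _)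
  set M := affineSpan k {x, p, q}
  have hpM : p ∈ M := mem_affineSpan k (by simp)
  have hqM : q ∈ M := mem_affineSpan k (by simp)
  have hpM' : p' ∈ M := heq ▸ mem_affineSpan k (by simp)
  have hqM' : q' ∈ M := heq ▸ mem_affineSpan k (by simp)
  have hL₀M : ¬ L₀ ≤ M := fun h =>
    hq₀ ((affineSpan_insert_eq_of_le_affineSpan_triple hL₀ hx₀ h).symm ▸ hqM)
  have hL₁M : ¬ L₁ ≤ M := fun h =>
    hp₁ ((affineSpan_insert_eq_of_le_affineSpan_triple hL₁ hx₁ h).symm ▸ hpM)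
  exact Prod.ext (eq_of_mem_of_mem_of_not_le hL₀ hL₀M hp₀ hp₀' hpM hpM')
    (eq_of_mem_of_mem_of_not_le hL₁ hL₁M hq₁ hq₁' hqM hqM')

end AffineSubspace

theorem stmt_4_general (a b : ℕ)
    (L₀ L₁ : AffineSubspace ℝ (EuclideanSpace ℝ (Fin 3)))
    (hL₀ : Module.finrank ℝ L₀.direction = 1)
    (hL₁ : Module.finrank ℝ L₁.direction = 1)
    (hskew : ¬ ∃ M : AffineSubspace ℝ (EuclideanSpace ℝ (Fin 3)),
      Module.finrank ℝ M.direction = 2 ∧ L₀ ≤ M ∧ L₁ ≤ M)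
    (A B : Finset (EuclideanSpace ℝ (Fin 3)))
    (hA : (A : Set (EuclideanSpace ℝ (Fin 3))) ⊆ L₀)
    (hB : (B : Set (EuclideanSpace ℝ (Fin 3))) ⊆ L₁)
    (hAcard : A.card = a) (hBcard : B.card = b)
    (P : EuclideanSpace ℝ (Fin 3)) (hP₀ : P ∉ L₀) (hP₁ : P ∉ L₁) :
    (a - 1) * (b - 1) ≤
      ((A ×ˢ B).image (fun pq =>
        affineSpan ℝ ({P, pq.1, pq.2} : Set (EuclideanSpace ℝ (Fin 3))))).card := by
  subst hAcard hBcard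
  set M₀ := affineSpan ℝ (insert P (L₀ : Set (EuclideanSpace ℝ (Fin 3))))
  set M₁ := affineSpan ℝ (insert P (L₁ : Set (EuclideanSpace ℝ (Fin 3))))
  have hL₁M₀ : ¬ L₁ ≤ M₀ := AffineSubspace.not_le_affineSpan_insert_of_skew hL₀ hP₀ hskew
  have hL₀M₁ : ¬ L₀ ≤ M₁ := AffineSubspace.not_le_affineSpan_insert_of_skew hL₁ hP₁
    fun ⟨M, hM, h₁, h₀⟩ => hskew ⟨M, hM, h₀, h₁⟩
  set A' := A.filter (· ∉ M₁)
  set B' := B.filter (· ∉ M₀)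
  set plane := fun pq : EuclideanSpace ℝ (Fin 3) × EuclideanSpace ℝ (Fin 3) =>
    affineSpan ℝ ({P, pq.1, pq.2} : Set (EuclideanSpace ℝ (Fin 3)))
  have hinj : Set.InjOn plane (A' ×ˢ B' : Finset _) :=
    (AffineSubspace.injOn_affineSpan_triple hL₀ hL₁ hP₀ hP₁).mono <| by
      rw [Finset.coe_product]
      refine Set.prod_mono ?_ ?_ <;> intro y hy <;> rw [Finset.mem_coe, Finset.mem_filter] at hy
      exacts [⟨hA hy.1, hy.2⟩, ⟨hB hy.1, hy.2⟩]
  calc (A.card - 1) * (B.card - 1) ≤ A'.card * B'.card :=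
        Nat.mul_le_mul (AffineSubspace.card_sub_one_le_card_filter_notMem hL₀ hL₀M₁ A hA)
          (AffineSubspace.card_sub_one_le_card_filter_notMem hL₁ hL₁M₀ B hB)
    _ = ((A' ×ˢ B').image plane).card := by
        rw [Finset.card_image_of_injOn hinj, Finset.card_product]
    _ ≤ ((A ×ˢ B).image plane).card := Finset.card_le_card <| Finset.image_subset_image <|
        Finset.product_subset_product (Finset.filter_subset _ _) (Finset.filter_subset _ _)

/-- Given skew lines `L₀, L₁` in ℝ³, finite sets `A ⊆ L₀`, `B ⊆ L₁` with `|A| = a ≥ 2`,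
`|B| = b ≥ 2`, and a point `P` on neither line, the set `A ∪ B ∪ {P}` spans at least
`(a-1)(b-1)` distinct planes through `P`: the map `(p,q) ↦ affineSpan {P,p,q}` takes at
least `(a-1)(b-1)` distinct values. -/
theorem stmt_4 (a b : ℕ) (ha : 2 ≤ a) (hb : 2 ≤ b)
    (L₀ L₁ : AffineSubspace ℝ (EuclideanSpace ℝ (Fin 3)))
    (hL₀ : Module.finrank ℝ L₀.direction = 1)
    (hL₁ : Module.finrank ℝ L₁.direction = 1)
    (hdisj : (L₀ : Set (EuclideanSpace ℝ (Fin 3))) ∩ L₁ = ∅)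
    (hskew : ¬ ∃ M : AffineSubspace ℝ (EuclideanSpace ℝ (Fin 3)),
      Module.finrank ℝ M.direction = 2 ∧ L₀ ≤ M ∧ L₁ ≤ M)
    (A B : Finset (EuclideanSpace ℝ (Fin 3)))
    (hA : (A : Set (EuclideanSpace ℝ (Fin 3))) ⊆ L₀)
    (hB : (B : Set (EuclideanSpace ℝ (Fin 3))) ⊆ L₁)
    (hAcard : A.card = a) (hBcard : B.card = b)
    (P : EuclideanSpace ℝ (Fin 3)) (hP₀ : P ∉ L₀) (hP₁ : P ∉ L₁) :
    (a - 1) * (b - 1) ≤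
      ((A ×ˢ B).image (fun pq =>
        affineSpan ℝ ({P, pq.1, pq.2} : Set (EuclideanSpace ℝ (Fin 3))))).card :=
  stmt_4_general a b L₀ L₁ hL₀ hL₁ hskew A B hA hB hAcard hBcard P hP₀ hP₁
end
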